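/- Assume in addition that g is locally Hölder continuous of some order β ∈ (0, H). Let (α, β') be a connected component of the open set {t > 0 : X_t > 0} with α > 0 (so that X_α = 0) and β' < ∞ (so that X_{β'} = 0). Then lim_{t↓α} X_t = 0 = X_α and lim_{t↑β'} X_t = 0 = X_{β'}. -/

import Mathlib

open MeasureTheory Filter Set

/-- `X` is a continuous solution on `[0,T]` of the ε-approximating equation
`X_t = X₀ + a ∫₀ᵗ (s+ε)^{2H-1} / (X_s 1_{X_s>0} + ε) ds − b ∫₀ᵗ X_s ds + σ g(t)`. -/
def approxSol (X₀ a b σ H : ℝ) (g : ℝ → ℝ) (T ε : ℝ) (X : ℝ → ℝ) : Prop :=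
  ContinuousOn X (Set.Icc 0 T) ∧
    ∀ t ∈ Set.Icc (0:ℝ) T,
      X t = X₀ + a * (∫ s in (0:ℝ)..t,
            (s + ε) ^ (2 * H - 1) / ((if 0 < X s then X s else 0) + ε))
          - b * (∫ s in (0:ℝ)..t, X s) + σ * g t

/-! On an interval where `X^ε ≤ 0` the drift density is at least of order `ε⁻¹`, which beats the
`β`-Hölder noise once `ε` is small; hence `X^ε ≥ -δ` for small `ε`, so `X ≥ 0` and
`X α = X β' = 0`. Where `X^ε ≥ c > 0` the drift density is at most `(s+ε)^{2H-1}/c`, whose integral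
over an interval of length `h` is at most `h^{2H}/(2H)`; so after its last visit to level `c`,
`X^ε` gains at most `h^{2H}/(2Hc) + σCh^β`, uniformly in `ε`. This gives `lim_{t↓α} X_t = 0` and a
uniform upper bound `M` on all `X^ε`, and then the drift pushing only upwards gives
`X^ε_u - X^ε_v ≤ bM(v-u) + σC(v-u)^β`, hence `lim_{t↑β'} X_t = 0`. -/

open Topology

theorem exists_last_crossing {Y : ℝ → ℝ} {p q c : ℝ} (hpq : p < q)
    (hY : ContinuousOn Y (Icc p q)) (hp : Y p ≤ c) (hq : c < Y q) :
    ∃ τ ∈ Ico p q, Y τ = c ∧ ∀ s ∈ Icc τ q, c ≤ Y s := by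
  set S := Icc p q ∩ Y ⁻¹' Iic c
  have hS : IsClosed S := hY.preimage_isClosed_of_isClosed isClosed_Icc isClosed_Iic
  have hSne : S.Nonempty := ⟨p, ⟨left_mem_Icc.2 hpq.le, hp⟩⟩
  have hSbdd : BddAbove S := ⟨q, fun s hs => hs.1.2⟩
  set τ := sSup S
  obtain ⟨⟨hpτ, hτq⟩, hYτ⟩ : τ ∈ S := hS.csSup_mem hSne hSbdd
  have hτq : τ < q := hτq.lt_of_ne fun h => hq.not_ge (h ▸ hYτ)
  have hgt : ∀ s ∈ Ioc τ q, c < Y s := fun s hs => not_le.1 fun hs' =>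
    hs.1.not_ge (le_csSup hSbdd ⟨⟨hpτ.trans hs.1.le, hs.2⟩, hs'⟩)
  have hcτ : c ≤ Y τ := by
    have hYlim : Tendsto Y (𝓝[Ioc τ q] τ) (𝓝 (Y τ)) :=
      (hY τ ⟨hpτ, hτq.le⟩).mono_left (nhdsWithin_mono _ (Ioc_subset_Icc_self.trans
        (Icc_subset_Icc_left hpτ)))
    have : (𝓝[Ioc τ q] τ).NeBot := left_nhdsWithin_Ioc_neBot hτq
    exact ge_of_tendsto hYlim (eventually_nhdsWithin_of_forall fun s hs => (hgt s hs).le)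
  refine ⟨τ, ⟨hpτ, hτq⟩, le_antisymm hYτ hcτ, fun s hs => ?_⟩
  rcases hs.1.eq_or_lt with rfl | hτs
  · exact hcτ
  · exact (hgt s ⟨hτs, hs.2⟩).le

theorem abs_sub_le_of_holderOn {g : ℝ → ℝ} {C β T u v : ℝ}
    (hg : ∀ s ∈ Icc (0:ℝ) T, ∀ t ∈ Icc (0:ℝ) T, |g t - g s| ≤ C * |t - s| ^ β)
    (hu : 0 ≤ u) (huv : u ≤ v) (hv : v ≤ T) : |g v - g u| ≤ C * (v - u) ^ β := by
  simpa [abs_of_nonneg (sub_nonneg.2 huv)] using hg u ⟨hu, huv.trans hv⟩ v ⟨hu.trans huv, hv⟩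

theorem eventually_forall_mul_rpow_le_add_div_mul {D K δ β : ℝ} (hD : 0 < D) (hK : 0 < K)
    (hδ : 0 < δ) (hβ0 : 0 < β) (hβ1 : β < 1) :
    ∀ᶠ ε in 𝓝[>] (0:ℝ), ∀ Δ ≥ 0, K * Δ ^ β ≤ δ + D / ε * Δ := by
  set Δ₀ := (δ / K) ^ β⁻¹
  have hΔ₀ : 0 < Δ₀ := by positivity
  have hKΔ₀ : K * Δ₀ ^ β = δ := by
    rw [Real.rpow_inv_rpow (by positivity) hβ0.ne']; field_simp
  filter_upwards [Ioo_mem_nhdsGT (show (0:ℝ) < D * Δ₀ ^ (1 - β) / K by positivity)]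
    with ε ⟨hε, hεsmall⟩ Δ hΔ
  rcases le_total Δ Δ₀ with hle | hge
  · calc K * Δ ^ β ≤ K * Δ₀ ^ β := by gcongr
      _ = δ := hKΔ₀
      _ ≤ δ + D / ε * Δ := le_add_of_nonneg_right (by positivity)
  · have hΔpos : 0 < Δ := hΔ₀.trans_le hge
    have hKε : K * ε ≤ D * Δ ^ (1 - β) :=
      calc K * ε ≤ D * Δ₀ ^ (1 - β) := by linarith [(lt_div_iff₀ hK).1 hεsmall]
        _ ≤ D * Δ ^ (1 - β) := by gcongr
    have hsplit : Δ ^ (1 - β) * Δ ^ β = Δ := by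
      rw [← Real.rpow_add hΔpos, sub_add_cancel, Real.rpow_one]
    calc K * Δ ^ β = K * ε * Δ ^ β / ε := by field_simp
      _ ≤ D * Δ ^ (1 - β) * Δ ^ β / ε := by gcongr
      _ = D / ε * Δ := by rw [mul_assoc, hsplit]; ring
      _ ≤ δ + D / ε * Δ := le_add_of_nonneg_left hδ.le

theorem tendsto_zero_of_forall_pos_le_add {ι : Type*} {l : Filter ι} {f : ι → ℝ}
    (h0 : ∀ᶠ i in l, 0 ≤ f i)
    (h : ∀ c > 0, ∃ r : ι → ℝ, Tendsto r l (𝓝 0) ∧ ∀ᶠ i in l, f i ≤ c + r i) :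
    Tendsto f l (𝓝 0) := by
  refine tendsto_order.2 ⟨fun d hd => h0.mono fun i hi => hd.trans_le hi, fun d hd => ?_⟩
  obtain ⟨r, hr, hfr⟩ := h (d / 2) (half_pos hd)
  filter_upwards [hfr, hr.eventually (gt_mem_nhds (half_pos hd))] with i hfi hri
  linarith

noncomputable def approxDrift (H ε : ℝ) (Y : ℝ → ℝ) (s : ℝ) : ℝ :=
  (s + ε) ^ (2 * H - 1) / (max 0 (Y s) + ε)

section ApproxSol

variable {X₀ a b σ H T ε : ℝ} {g Y : ℝ → ℝ}

theorem approxDrift_nonneg (hε : 0 < ε) {s : ℝ} (hs : 0 ≤ s) : 0 ≤ approxDrift H ε Y s := by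
  unfold approxDrift; positivity

theorem continuousOn_approxDrift (hε : 0 < ε) {S : Set ℝ} (hY : ContinuousOn Y S)
    (hS : S ⊆ Ici 0) : ContinuousOn (approxDrift H ε Y) S := by
  refine ContinuousOn.div ?_ ((continuousOn_const.sup hY).add continuousOn_const)
    fun s _ => by positivity
  exact ContinuousOn.rpow_const (by fun_prop) fun s hs =>
    Or.inl (by have : (0:ℝ) ≤ s := hS hs; positivity)

theorem approxSol.apply_zero (h : approxSol X₀ a b σ H g T ε Y) (hT : 0 ≤ T) (hg0 : g 0 = 0) :
    Y 0 = X₀ := by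
  simpa [hg0] using h.2 0 ⟨le_rfl, hT⟩

theorem approxSol.sub_eq (h : approxSol X₀ a b σ H g T ε Y) (hε : 0 < ε) {u v : ℝ}
    (hu : 0 ≤ u) (huv : u ≤ v) (hv : v ≤ T) :
    Y v - Y u = a * (∫ s in u..v, approxDrift H ε Y s) - b * (∫ s in u..v, Y s)
      + σ * (g v - g u) := by
  have hdrift : ∀ t, (∫ s in (0:ℝ)..t,
      (s + ε) ^ (2 * H - 1) / ((if 0 < Y s then Y s else 0) + ε)) =
      ∫ s in (0:ℝ)..t, approxDrift H ε Y s := fun t => by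
    simp only [approxDrift, max_def_lt]
  have hint : ∀ t ∈ Icc 0 T, IntervalIntegrable (approxDrift H ε Y) volume 0 t ∧
      IntervalIntegrable Y volume 0 t := fun t ht => by
    have hsub : uIcc 0 t ⊆ Icc 0 T := by rw [uIcc_of_le ht.1]; exact Icc_subset_Icc_right ht.2
    exact ⟨(continuousOn_approxDrift hε (h.1.mono hsub)
      (hsub.trans Icc_subset_Ici_self)).intervalIntegrable, (h.1.mono hsub).intervalIntegrable⟩
  obtain ⟨hφu, hYu⟩ := hint u ⟨hu, huv.trans hv⟩
  obtain ⟨hφv, hYv⟩ := hint v ⟨hu.trans huv, hv⟩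
  rw [h.2 v ⟨hu.trans huv, hv⟩, h.2 u ⟨hu, huv.trans hv⟩, hdrift, hdrift,
    ← intervalIntegral.integral_interval_sub_left hφv hφu,
    ← intervalIntegral.integral_interval_sub_left hYv hYu]
  ring

theorem integral_approxDrift_le (hH0 : 0 < H) (hH : H ≤ 1 / 2) (hε : 0 < ε) {c u v : ℝ}
    (hc : 0 < c) (hu : 0 ≤ u) (huv : u ≤ v) (hYc : ContinuousOn Y (Icc u v))
    (hY : ∀ s ∈ Icc u v, c ≤ Y s) :
    ∫ s in u..v, approxDrift H ε Y s ≤ (v - u) ^ (2 * H) / (2 * H * c) := by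
  have hpow : ∫ s in u..v, (s + ε) ^ (2 * H - 1) =
      ((v + ε) ^ (2 * H) - (u + ε) ^ (2 * H)) / (2 * H) := by
    rw [intervalIntegral.integral_comp_add_right (fun x => x ^ (2 * H - 1)),
      integral_rpow (Or.inl (by linarith)), sub_add_cancel]
  have hsub : (v + ε) ^ (2 * H) ≤ (u + ε) ^ (2 * H) + (v - u) ^ (2 * H) := by
    calc (v + ε) ^ (2 * H) = ((u + ε) + (v - u)) ^ (2 * H) := by ring_nf
      _ ≤ _ := Real.rpow_add_le_add_rpow (by positivity) (by linarith) (by positivity)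
          (by linarith)
  have hmajorant : ContinuousOn (fun s => (s + ε) ^ (2 * H - 1) / c) (Icc u v) :=
    (ContinuousOn.rpow_const (by fun_prop)
      fun s hs => Or.inl (by have := hu.trans hs.1; positivity)).div_const c
  calc ∫ s in u..v, approxDrift H ε Y s ≤ ∫ s in u..v, (s + ε) ^ (2 * H - 1) / c := by
        refine intervalIntegral.integral_mono_on huv ?_ (hmajorant.intervalIntegrable_of_Icc huv)
          fun s hs => div_le_div_of_nonneg_left ?_ hc ?_
        · exact (continuousOn_approxDrift hε hYc
            fun s hs => hu.trans hs.1).intervalIntegrable_of_Icc huv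
        · have := hu.trans hs.1; positivity
        · linarith [hY s hs, le_max_right 0 (Y s)]
    _ = ((v + ε) ^ (2 * H) - (u + ε) ^ (2 * H)) / (2 * H) / c := by
        rw [intervalIntegral.integral_div, hpow]
    _ ≤ (v - u) ^ (2 * H) / (2 * H * c) := by
        rw [div_div]; gcongr; linarith

theorem mul_le_integral_approxDrift (hH : H ≤ 1 / 2) (hε : 0 < ε) (hε1 : ε ≤ 1) {u v : ℝ}
    (hu : 0 ≤ u) (huv : u ≤ v) (hv : v ≤ T) (hYc : ContinuousOn Y (Icc u v))
    (hY : ∀ s ∈ Icc u v, Y s ≤ 0) :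
    (T + 1) ^ (2 * H - 1) / ε * (v - u) ≤ ∫ s in u..v, approxDrift H ε Y s := by
  have hφ : IntervalIntegrable (approxDrift H ε Y) volume u v :=
    (continuousOn_approxDrift hε hYc fun s hs => hu.trans hs.1).intervalIntegrable_of_Icc huv
  have := intervalIntegral.integral_mono_on huv
    (intervalIntegrable_const (c := (T + 1) ^ (2 * H - 1) / ε)) hφ fun s hs => by
    have hs0 : 0 ≤ s := hu.trans hs.1
    rw [approxDrift, max_eq_left (hY s hs), zero_add]
    gcongr (?_ / ε)
    exact Real.rpow_le_rpow_of_nonpos (by positivity) (by linarith [hs.2]) (by linarith)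
  rwa [intervalIntegral.integral_const, smul_eq_mul, mul_comm] at this

theorem approxSol.sub_le_of_forall_ge (h : approxSol X₀ a b σ H g T ε Y) (ha : 0 ≤ a)
    (hb : 0 ≤ b) (hH0 : 0 < H) (hH : H ≤ 1 / 2) (hε : 0 < ε) {c u v : ℝ} (hc : 0 < c)
    (hu : 0 ≤ u) (huv : u ≤ v) (hv : v ≤ T) (hY : ∀ s ∈ Icc u v, c ≤ Y s) :
    Y v - Y u ≤ a * ((v - u) ^ (2 * H) / (2 * H * c)) + σ * (g v - g u) := by
  have hdrift := integral_approxDrift_le hH0 hH hε hc hu huv (h.1.mono (Icc_subset_Icc hu hv)) hY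
  have hpos : 0 ≤ ∫ s in u..v, Y s :=
    intervalIntegral.integral_nonneg huv fun s hs => hc.le.trans (hY s hs)
  rw [h.sub_eq hε hu huv hv]
  linarith [mul_le_mul_of_nonneg_left hdrift ha, mul_nonneg hb hpos]

theorem approxSol.le_sub_of_forall_nonpos (h : approxSol X₀ a b σ H g T ε Y) (ha : 0 ≤ a)
    (hb : 0 ≤ b) (hH : H ≤ 1 / 2) (hε : 0 < ε) (hε1 : ε ≤ 1) {u v : ℝ}
    (hu : 0 ≤ u) (huv : u ≤ v) (hv : v ≤ T) (hY : ∀ s ∈ Icc u v, Y s ≤ 0) :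
    a * ((T + 1) ^ (2 * H - 1) / ε * (v - u)) + σ * (g v - g u) ≤ Y v - Y u := by
  have hYc : ContinuousOn Y (Icc u v) := h.1.mono (Icc_subset_Icc hu hv)
  have hdrift := mul_le_integral_approxDrift hH hε hε1 hu huv hv hYc hY
  have hneg : ∫ s in u..v, Y s ≤ 0 := by
    simpa using intervalIntegral.integral_mono_on huv (hYc.intervalIntegrable_of_Icc huv)
      intervalIntegrable_const hY
  rw [h.sub_eq hε hu huv hv]
  linarith [mul_le_mul_of_nonneg_left hdrift ha, mul_nonpos_of_nonneg_of_nonpos hb hneg]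

theorem approxSol.sub_le_of_forall_le (h : approxSol X₀ a b σ H g T ε Y) (ha : 0 ≤ a)
    (hb : 0 ≤ b) (hε : 0 < ε) {M u v : ℝ} (hu : 0 ≤ u) (huv : u ≤ v) (hv : v ≤ T)
    (hY : ∀ s ∈ Icc u v, Y s ≤ M) :
    Y u - Y v ≤ b * (M * (v - u)) + σ * (g u - g v) := by
  have hYc : ContinuousOn Y (Icc u v) := h.1.mono (Icc_subset_Icc hu hv)
  have hdrift : 0 ≤ ∫ s in u..v, approxDrift H ε Y s :=
    intervalIntegral.integral_nonneg huv fun s hs => approxDrift_nonneg hε (hu.trans hs.1)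
  have hbound : ∫ s in u..v, Y s ≤ M * (v - u) := by
    simpa [mul_comm] using intervalIntegral.integral_mono_on huv
      (hYc.intervalIntegrable_of_Icc (μ := volume) huv) intervalIntegrable_const hY
  rw [← neg_sub, h.sub_eq hε hu huv hv]
  linarith [mul_nonneg ha hdrift, mul_le_mul_of_nonneg_left hbound hb]

theorem approxSol.le_add_of_le (h : approxSol X₀ a b σ H g T ε Y) (ha : 0 ≤ a) (hb : 0 ≤ b)
    (hσ : 0 ≤ σ) (hH0 : 0 < H) (hH : H ≤ 1 / 2) (hε : 0 < ε) {β C : ℝ} (hβ : 0 ≤ β)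
    (hC : 0 ≤ C) (hg : ∀ s ∈ Icc (0:ℝ) T, ∀ t ∈ Icc (0:ℝ) T, |g t - g s| ≤ C * |t - s| ^ β)
    {c p t : ℝ} (hc : 0 < c) (hp : 0 ≤ p) (hpt : p ≤ t) (ht : t ≤ T) (hYp : Y p ≤ c) :
    Y t ≤ c + (a * ((t - p) ^ (2 * H) / (2 * H * c)) + σ * (C * (t - p) ^ β)) := by
  have htp : 0 ≤ t - p := sub_nonneg.2 hpt
  by_cases hYt : Y t ≤ c
  · have : 0 ≤ a * ((t - p) ^ (2 * H) / (2 * H * c)) + σ * (C * (t - p) ^ β) := by positivity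
    linarith
  obtain ⟨τ, ⟨hpτ, hτt⟩, hYτ, hY⟩ := exists_last_crossing
    (hpt.lt_of_ne fun hpt => hYt (hpt ▸ hYp)) (h.1.mono (Icc_subset_Icc hp ht)) hYp
    (not_le.1 hYt)
  have hinc := h.sub_le_of_forall_ge ha hb hH0 hH hε hc (hp.trans hpτ) hτt.le ht hY
  have hgτ := (abs_le.1 (abs_sub_le_of_holderOn hg (hp.trans hpτ) hτt.le ht)).2
  calc Y t ≤ c + (a * ((t - τ) ^ (2 * H) / (2 * H * c)) + σ * (C * (t - τ) ^ β)) := by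
        linarith [mul_le_mul_of_nonneg_left hgτ hσ]
    _ ≤ c + (a * ((t - p) ^ (2 * H) / (2 * H * c)) + σ * (C * (t - p) ^ β)) := by
        gcongr

theorem approxSol.neg_le (h : approxSol X₀ a b σ H g T ε Y) (hX₀ : 0 ≤ X₀) (ha : 0 ≤ a)
    (hb : 0 ≤ b) (hσ : 0 ≤ σ) (hH : H ≤ 1 / 2) (hε : 0 < ε) (hε1 : ε ≤ 1) (hg0 : g 0 = 0)
    {β C δ : ℝ} (hg : ∀ s ∈ Icc (0:ℝ) T, ∀ t ∈ Icc (0:ℝ) T, |g t - g s| ≤ C * |t - s| ^ β)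
    (hδ : 0 ≤ δ) (hsmall : ∀ Δ ≥ 0, σ * (C * Δ ^ β) ≤ δ + a * ((T + 1) ^ (2 * H - 1) / ε * Δ))
    {t : ℝ} (ht : t ∈ Icc 0 T) : -δ ≤ Y t := by
  by_cases hYt : 0 ≤ Y t
  · linarith
  have hY0 : Y 0 = X₀ := h.apply_zero (ht.1.trans ht.2) hg0
  obtain ⟨τ, ⟨hτ0, hτt⟩, hYτ, hY⟩ := exists_last_crossing (Y := fun s => -Y s) (c := 0)
    (ht.1.lt_of_ne fun h0 => hYt (h0 ▸ hY0 ▸ hX₀)) (h.1.neg.mono (Icc_subset_Icc_right ht.2))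
    (by simpa [hY0] using hX₀) (by simpa using hYt)
  have hinc := h.le_sub_of_forall_nonpos ha hb hH hε hε1 hτ0 hτt.le ht.2
    fun s hs => by simpa using hY s hs
  have hgτ := (abs_le.1 (abs_sub_le_of_holderOn hg hτ0 hτt.le ht.2)).1
  have := hsmall (t - τ) (by linarith)
  simp only [neg_eq_zero] at hYτ
  linarith [mul_le_mul_of_nonneg_left hgτ hσ]

end ApproxSol

structure IsApproxLimit (X₀ a b σ H : ℝ) (g : ℝ → ℝ) (T : ℝ) (Xe : ℝ → ℝ → ℝ) (X : ℝ → ℝ) :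
    Prop where
  sol : ∀ ε > 0, approxSol X₀ a b σ H g T ε (Xe ε)
  tendsto : ∀ t ∈ Icc 0 T, Tendsto (fun ε => Xe ε t) (𝓝[>] 0) (𝓝 (X t))

namespace IsApproxLimit

variable {X₀ a b σ H T β C : ℝ} {g : ℝ → ℝ} {Xe : ℝ → ℝ → ℝ} {X : ℝ → ℝ}

theorem nonneg (hX : IsApproxLimit X₀ a b σ H g T Xe X) (hX₀ : 0 ≤ X₀) (ha : 0 < a) (hb : 0 ≤ b)
    (hσ : 0 < σ) (hH : H ≤ 1 / 2) (hg0 : g 0 = 0) (hβ0 : 0 < β) (hβ1 : β < 1) (hC : 0 < C)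
    (hg : ∀ s ∈ Icc (0:ℝ) T, ∀ t ∈ Icc (0:ℝ) T, |g t - g s| ≤ C * |t - s| ^ β)
    {t : ℝ} (ht : t ∈ Icc 0 T) : 0 ≤ X t := by
  refine le_of_forall_pos_le_add fun δ hδ => ?_
  have hD : 0 < a * (T + 1) ^ (2 * H - 1) :=
    mul_pos ha (Real.rpow_pos_of_pos (by linarith [ht.1, ht.2]) _)
  have hlower : ∀ᶠ ε in 𝓝[>] 0, -δ ≤ Xe ε t := by
    filter_upwards [eventually_forall_mul_rpow_le_add_div_mul hD (mul_pos hσ hC) hδ hβ0 hβ1,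
      Ioo_mem_nhdsGT one_pos] with ε hsmall ⟨hε, hε1⟩
    refine (hX.sol ε hε).neg_le hX₀ ha.le hb hσ.le hH hε hε1.le hg0 hg hδ.le (fun Δ hΔ => ?_) ht
    convert hsmall Δ hΔ using 1 <;> ring
  linarith [ge_of_tendsto (hX.tendsto t ht) hlower]

theorem tendsto_nhdsGT (hX : IsApproxLimit X₀ a b σ H g T Xe X) (ha : 0 ≤ a) (hb : 0 ≤ b)
    (hσ : 0 ≤ σ) (hH0 : 0 < H) (hH : H ≤ 1 / 2) (hβ0 : 0 < β) (hC : 0 ≤ C)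
    (hg : ∀ s ∈ Icc (0:ℝ) T, ∀ t ∈ Icc (0:ℝ) T, |g t - g s| ≤ C * |t - s| ^ β)
    (hnonneg : ∀ t ∈ Icc 0 T, 0 ≤ X t) {α : ℝ} (hα : 0 ≤ α) (hαT : α < T) (hXα : X α ≤ 0) :
    Tendsto X (𝓝[>] α) (𝓝 0) := by
  have hIoo : Ioo α T ∈ 𝓝[>] α := Ioo_mem_nhdsGT hαT
  refine tendsto_zero_of_forall_pos_le_add
    (mem_of_superset hIoo fun t ht => hnonneg t ⟨hα.trans ht.1.le, ht.2.le⟩) fun c hc => ?_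
  set r := fun t => a * ((t - α) ^ (2 * H) / (2 * H * c)) + σ * (C * (t - α) ^ β)
  have hr : Continuous r := by fun_prop (disch := positivity)
  refine ⟨r, ?_, mem_of_superset hIoo fun t ht => ?_⟩
  · refine (hr.tendsto' α 0 ?_).mono_left nhdsWithin_le_nhds
    simp [r, Real.zero_rpow (by positivity : 2 * H ≠ 0), Real.zero_rpow hβ0.ne']
  · have hXeα : ∀ᶠ ε in 𝓝[>] 0, Xe ε α < c :=
      (hX.tendsto α ⟨hα, hαT.le⟩).eventually (gt_mem_nhds (hXα.trans_lt hc))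
    refine le_of_tendsto (hX.tendsto t ⟨hα.trans ht.1.le, ht.2.le⟩) ?_
    filter_upwards [hXeα, self_mem_nhdsWithin] with ε hεα (hε : 0 < ε)
    exact (hX.sol ε hε).le_add_of_le ha hb hσ hH0 hH hε hβ0.le hC hg hc hα ht.1.le ht.2.le
      hεα.le

theorem tendsto_nhdsLT (hX : IsApproxLimit X₀ a b σ H g T Xe X) (hX₀ : 0 < X₀) (ha : 0 ≤ a)
    (hb : 0 ≤ b) (hσ : 0 ≤ σ) (hH0 : 0 < H) (hH : H ≤ 1 / 2) (hg0 : g 0 = 0) (hβ0 : 0 < β)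
    (hC : 0 ≤ C) (hg : ∀ s ∈ Icc (0:ℝ) T, ∀ t ∈ Icc (0:ℝ) T, |g t - g s| ≤ C * |t - s| ^ β)
    (hnonneg : ∀ t ∈ Icc 0 T, 0 ≤ X t) {β' : ℝ} (hβ' : 0 < β') (hβ'T : β' ≤ T) (hXβ : X β' ≤ 0) :
    Tendsto X (𝓝[<] β') (𝓝 0) := by
  obtain ⟨M, hM⟩ : ∃ M, ∀ ε > 0, ∀ s ∈ Icc 0 T, Xe ε s ≤ M := by
    refine ⟨X₀ + (a * (T ^ (2 * H) / (2 * H * X₀)) + σ * (C * T ^ β)), fun ε hε s hs => ?_⟩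
    have hXe0 := (hX.sol ε hε).apply_zero (hs.1.trans hs.2) hg0
    calc Xe ε s ≤ X₀ + (a * ((s - 0) ^ (2 * H) / (2 * H * X₀)) + σ * (C * (s - 0) ^ β)) :=
          (hX.sol ε hε).le_add_of_le ha hb hσ hH0 hH hε hβ0.le hC hg hX₀ le_rfl hs.1 hs.2
            hXe0.le
      _ ≤ _ := by gcongr <;> linarith [hs.1, hs.2]
  set r := fun t => b * (M * (β' - t)) + σ * (C * (β' - t) ^ β)
  have hr : Tendsto r (𝓝[<] β') (𝓝 0) := by
    have : Continuous r := by fun_prop (disch := positivity)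
    refine (this.tendsto' β' 0 ?_).mono_left nhdsWithin_le_nhds
    simp [r, Real.zero_rpow hβ0.ne']
  have hIoo : Ioo 0 β' ∈ 𝓝[<] β' := Ioo_mem_nhdsLT hβ'
  refine tendsto_of_tendsto_of_tendsto_of_le_of_le' tendsto_const_nhds hr
    (mem_of_superset hIoo fun t ht => hnonneg t ⟨ht.1.le, ht.2.le.trans hβ'T⟩)
    (mem_of_superset hIoo fun t ht => ?_)
  have hbound : ∀ᶠ ε in 𝓝[>] 0, Xe ε t ≤ Xe ε β' + r t := by
    filter_upwards [self_mem_nhdsWithin] with ε (hε : 0 < ε)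
    have hinc := (hX.sol ε hε).sub_le_of_forall_le ha hb hε ht.1.le ht.2.le hβ'T
      fun s hs => hM ε hε s ⟨ht.1.le.trans hs.1, hs.2.trans hβ'T⟩
    have hgβ := (abs_le.1 (abs_sub_le_of_holderOn hg ht.1.le ht.2.le hβ'T)).1
    linarith [mul_le_mul_of_nonneg_left hgβ hσ]
  have := le_of_tendsto_of_tendsto (hX.tendsto t ⟨ht.1.le, ht.2.le.trans hβ'T⟩)
    ((hX.tendsto β' ⟨hβ'.le, hβ'T⟩).add_const (r t)) hbound
  show X t ≤ r t
  linarith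

end IsApproxLimit

theorem excursion_endpoints_limits_general
    (X₀ a b σ H : ℝ) (hX₀ : 0 < X₀) (ha : 0 < a) (hb : 0 ≤ b) (hσ : 0 < σ)
    (hH0 : 0 < H) (hH : H < 1/2)
    (g : ℝ → ℝ) (hg0 : g 0 = 0)
    (Xe : ℝ → ℝ → ℝ)
    (hXe : ∀ ε > (0:ℝ), ∀ T > (0:ℝ), approxSol X₀ a b σ H g T ε (Xe ε))
    (X : ℝ → ℝ)
    (hX : ∀ t ≥ (0:ℝ),
      Tendsto (fun ε => Xe ε t) (nhdsWithin 0 (Set.Ioi 0)) (nhds (X t)))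
    (β : ℝ) (hβ0 : 0 < β) (hβH : β < H)
    (hgH : ∀ T > (0:ℝ), ∃ C > (0:ℝ), ∀ s ∈ Set.Icc (0:ℝ) T, ∀ t ∈ Set.Icc (0:ℝ) T,
      |g t - g s| ≤ C * |t - s| ^ β)
    (α β' : ℝ) (hα : 0 < α) (hαβ : α < β')
    (hXα : X α ≤ 0) (hXβ : X β' ≤ 0) :
    (Tendsto X (nhdsWithin α (Set.Ioi α)) (nhds 0) ∧ X α = 0) ∧
    (Tendsto X (nhdsWithin β' (Set.Iio β')) (nhds 0) ∧ X β' = 0) := by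
  have hT : 0 < β' + 1 := by linarith
  obtain ⟨C, hC, hg⟩ := hgH (β' + 1) hT
  have hlim : IsApproxLimit X₀ a b σ H g (β' + 1) Xe X :=
    ⟨fun ε hε => hXe ε hε _ hT, fun t ht => hX t ht.1⟩
  have hnonneg : ∀ t ∈ Icc 0 (β' + 1), 0 ≤ X t := fun t ht =>
    hlim.nonneg hX₀.le ha hb hσ hH.le hg0 hβ0 (by linarith) hC hg ht
  refine ⟨⟨?_, le_antisymm hXα (hnonneg α ⟨hα.le, by linarith⟩)⟩,
    ⟨?_, le_antisymm hXβ (hnonneg β' ⟨by linarith, by linarith⟩)⟩⟩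
  · exact hlim.tendsto_nhdsGT ha.le hb hσ.le hH0 hH.le hβ0 hC.le hg hnonneg hα.le
      (by linarith) hXα
  · exact hlim.tendsto_nhdsLT hX₀ ha.le hb hσ.le hH0 hH.le hg0 hβ0 hC.le hg hnonneg
      (by linarith) (by linarith) hXβ

/-- **Theorem 3.9(a).** Let `(α, β')` be a connected component of
`{t > 0 : X_t > 0}` with `α > 0` and `β' < ∞` (so `X_α ≤ 0` and `X_{β'} ≤ 0`).
Then `lim_{t↓α} X_t = 0 = X_α` and `lim_{t↑β'} X_t = 0 = X_{β'}`. -/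
theorem excursion_endpoints_limits
    (X₀ a b σ H : ℝ) (hX₀ : 0 < X₀) (ha : 0 < a) (hb : 0 ≤ b) (hσ : 0 < σ)
    (hH0 : 0 < H) (hH : H < 1/2)
    (g : ℝ → ℝ) (hgc : ContinuousOn g (Set.Ici 0)) (hg0 : g 0 = 0)
    (Xe : ℝ → ℝ → ℝ)
    (hXe : ∀ ε > (0:ℝ), ∀ T > (0:ℝ), approxSol X₀ a b σ H g T ε (Xe ε))
    (X : ℝ → ℝ)
    (hX : ∀ t ≥ (0:ℝ),
      Tendsto (fun ε => Xe ε t) (nhdsWithin 0 (Set.Ioi 0)) (nhds (X t)))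
    (β : ℝ) (hβ0 : 0 < β) (hβH : β < H)
    (hgH : ∀ T > (0:ℝ), ∃ C > (0:ℝ), ∀ s ∈ Set.Icc (0:ℝ) T, ∀ t ∈ Set.Icc (0:ℝ) T,
      |g t - g s| ≤ C * |t - s| ^ β)
    (α β' : ℝ) (hα : 0 < α) (hαβ : α < β')
    (hcomp : ∀ t ∈ Set.Ioo α β', 0 < X t)
    (hXα : X α ≤ 0) (hXβ : X β' ≤ 0) :
    (Tendsto X (nhdsWithin α (Set.Ioi α)) (nhds 0) ∧ X α = 0) ∧
    (Tendsto X (nhdsWithin β' (Set.Iio β')) (nhds 0) ∧ X β' = 0) :=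
  excursion_endpoints_limits_general X₀ a b σ H hX₀ ha hb hσ hH0 hH g hg0 Xe hXe X hX β hβ0 hβH hgH
    α β' hα hαβ hXα hXβ
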